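/- Let G be a 3-colorable almost good graph with a fixed vertex v0 and associated partition V(G) = T_G ∪ M_G ∪ B_G, and let G1 = G ∪ {ab} for some non-edge ab of G with a ∈ T_G, where G1 is 3-colorable. If there exists a vertex x ≠ a such that Γ_{G1}(x) ≠ Γ_G(x), then b ∈ B_G, b ≠ x, and there exists an edge ub of G with u ∈ V(Γ_G(x)). -/

import Mathlib

open SimpleGraph

/-- The graph obtained from `G` by adding the edge `e`. -/
def addEdge {V : Type*} (G : SimpleGraph V) (e : Sym2 V) : SimpleGraph V :=
  G ⊔ SimpleGraph.fromEdgeSet {e}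

/-- Top vertices: the vertices receiving the same color as `v0` in every proper
3-coloring of `G`. -/
def topSet {V : Type*} (G : SimpleGraph V) (v0 : V) : Set V :=
  {x | ∀ c : G.Coloring (Fin 3), c x = c v0}

/-- Middle vertices: the vertices outside the top having a neighbor in the top. -/
def midSet {V : Type*} (G : SimpleGraph V) (v0 : V) : Set V :=
  {x | x ∉ topSet G v0 ∧ ∃ t ∈ topSet G v0, G.Adj x t}

/-- Bottom vertices: all remaining vertices. -/
def bottomSet {V : Type*} (G : SimpleGraph V) (v0 : V) : Set V :=
  {x | x ∉ topSet G v0 ∧ x ∉ midSet G v0}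

/-- The vertex set of `Γ_G(u)`, the connected component of `u` in the subgraph of `G`
induced on `{u} ∪ M_G`: all vertices reachable from `u` by a walk staying inside
`{u} ∪ M_G`. -/
def gammaSet {V : Type*} (G : SimpleGraph V) (v0 u : V) : Set V :=
  {w | ∃ p : G.Walk u w, ∀ z ∈ p.support, z ∈ insert u (midSet G v0)}

/-- `m` and `m'` lie in the same middle-component of `G` (a connected component of the
subgraph induced on `M_G`): they are joined by a walk staying inside `M_G`. -/
def midReach {V : Type*} (G : SimpleGraph V) (v0 : V) (m m' : V) : Prop :=
  ∃ p : G.Walk m m', ∀ z ∈ p.support, z ∈ midSet G v0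

/-- Property (P1): the bottom `B_G` is an independent set in `G`. -/
def prop1 {V : Type*} (G : SimpleGraph V) (v0 : V) : Prop :=
  ∀ u ∈ bottomSet G v0, ∀ v ∈ bottomSet G v0, ¬ G.Adj u v

/-- Property (P2): every middle-component of `G` has at most one attached bottom
vertex. -/
def prop2 {V : Type*} (G : SimpleGraph V) (v0 : V) : Prop :=
  ∀ u v m m' : V, u ∈ bottomSet G v0 → v ∈ bottomSet G v0 →
    m ∈ midSet G v0 → m' ∈ midSet G v0 →
    G.Adj u m → G.Adj v m' → midReach G v0 m m' → u = v

/-- `G` is good: it satisfies properties (P1) and (P2). -/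
def goodGraph {V : Type*} (G : SimpleGraph V) (v0 : V) : Prop :=
  prop1 G v0 ∧ prop2 G v0

/-- The bad pairs `BAD_G`: the pairs `uv` such that there exist distinct bottom vertices
`x ≠ y` with `u ∈ V(Γ_G(x))` and `v ∈ V(Γ_G(y))`. -/
def badPair {V : Type*} (G : SimpleGraph V) (v0 : V) (e : Sym2 V) : Prop :=
  ∃ u v x y : V, e = s(u, v) ∧ x ∈ bottomSet G v0 ∧ y ∈ bottomSet G v0 ∧ x ≠ y ∧
    u ∈ gammaSet G v0 x ∧ v ∈ gammaSet G v0 y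

/-- `G` is almost good: `G` is good, or some edge can be removed from `G` so that the
resulting graph is good. -/
def almostGood {V : Type*} (G : SimpleGraph V) (v0 : V) : Prop :=
  goodGraph G v0 ∨ ∃ e ∈ G.edgeSet, goodGraph (G.deleteEdges {e}) v0

/-!
A walk witnessing `Γ_{G₁}(x) ≠ Γ_G(x)` avoids `a ∈ T_{G₁}`, so it is a walk of `G`; it leaves
`Γ_G(x)` at a vertex `z` that is bottom in `G` but middle in `G₁`. If `b` were middle in `G`,
every coloring of `G` would extend to `G₁`, so `G` and `G₁` would have the same top and middle
vertices and no such walk could exist; hence `b` is bottom. If `z ≠ b`, the top neighbour `t` of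
`z` in `G₁` is bottom in `G`, so `zt` is the one edge whose removal makes `G` good. In the good
graph `G - zt` we recolor the region of `b` (`b` with its attached middle-components) by a
coloring separating `b` from `v0`, keeping a coloring separating `t` from `v0` elsewhere. The
result is still a coloring of `G` and extends to `G₁`, contradicting `t ∈ T_{G₁}`.
-/

namespace SimpleGraph.Coloring

variable {V α : Type*} {G : SimpleGraph V}

lemma exists_piecewise (c₁ c₂ : G.Coloring α) (S : Set V)
    (h : ∀ u v, G.Adj u v → u ∈ S → v ∉ S → c₂ u ≠ c₁ v) :
    ∃ c : G.Coloring α, (∀ u ∈ S, c u = c₂ u) ∧ ∀ u ∉ S, c u = c₁ u := by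
  classical
  refine ⟨Coloring.mk (S.piecewise c₂ c₁) fun {u v} huv => ?_,
    fun u hu => S.piecewise_eq_of_mem _ _ hu, fun u hu => S.piecewise_eq_of_notMem _ _ hu⟩
  by_cases hu : u ∈ S <;> by_cases hv : v ∈ S <;>
    simp only [Set.piecewise_eq_of_mem, Set.piecewise_eq_of_notMem, hu, hv, not_false_eq_true]
  · exact c₂.valid huv
  · exact h u v huv hu hv
  · exact (h v u huv.symm hv hu).symm
  · exact c₁.valid huv

lemma exists_apply_eq (c : G.Coloring α) (u : V) (k : α) :
    ∃ c' : G.Coloring α, c' u = k ∧ ∀ v w, c' v = c' w ↔ c v = c w := by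
  classical
  let σ := Equiv.swap (c u) k
  exact ⟨Coloring.mk (σ ∘ c) fun huv h => c.valid huv (σ.injective h),
    Equiv.swap_apply_left _ _, fun _ _ => σ.injective.eq_iff⟩

lemma exists_sup_edge (c : G.Coloring α) {s t : V} (h : c s ≠ c t) :
    ∃ c' : (G ⊔ edge s t).Coloring α, ⇑c' = ⇑c := by
  refine ⟨Coloring.mk c fun {u v} huv => ?_, rfl⟩
  rcases huv with huv | huv
  · exact c.valid huv
  · rcases ((edge_adj ..).1 huv).1 with ⟨rfl, rfl⟩ | ⟨rfl, rfl⟩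
    exacts [h, h.symm]

lemma exists_of_deleteEdges {s t : V} (c : (G.deleteEdges {s(s, t)}).Coloring α)
    (h : c s ≠ c t) : ∃ c' : G.Coloring α, ⇑c' = ⇑c := by
  obtain ⟨c', hc'⟩ := c.exists_sup_edge h
  have hle : G ≤ G.deleteEdges {s(s, t)} ⊔ edge s t := by
    intro u v huv
    by_cases he : s(u, v) = s(s, t)
    · exact Or.inr ((adj_edge ..).2 ⟨he.symm, huv.ne⟩)
    · exact Or.inl ((deleteEdges_adj ..).2 ⟨huv, he⟩)
  exact ⟨c'.comp (Hom.ofLE hle), hc'⟩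

end SimpleGraph.Coloring

section Partition

variable {V : Type*} {G H : SimpleGraph V} {v0 u v x : V}

lemma v0_mem_topSet : v0 ∈ topSet G v0 := fun _ => rfl

lemma topSet_mono (h : G ≤ H) : topSet G v0 ⊆ topSet H v0 :=
  fun _ hy c => hy (c.comp (Hom.ofLE h))

lemma apply_ne_of_mem_midSet (c : G.Coloring (Fin 3)) (hu : u ∈ midSet G v0) : c u ≠ c v0 := by
  obtain ⟨-, t, ht, hut⟩ := hu
  exact fun h => c.valid hut (h.trans (ht c).symm)

lemma notMem_topSet_of_adj (c : G.Coloring (Fin 3)) (huv : G.Adj u v)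
    (hu : u ∈ topSet G v0) : v ∉ topSet G v0 :=
  fun hv => c.valid huv ((hu c).trans (hv c).symm)

lemma midSet_mono (h : G ≤ H) (hH : H.Colorable 3) : midSet G v0 ⊆ midSet H v0 := by
  obtain ⟨c⟩ := hH
  rintro m ⟨-, t, ht, hmt⟩
  exact ⟨notMem_topSet_of_adj c (h hmt.symm) (topSet_mono h ht), t, topSet_mono h ht, h hmt⟩

lemma bottomSet_anti (h : G ≤ H) : bottomSet H v0 ⊆ bottomSet G v0 := by
  rintro u ⟨huT, huM⟩
  refine ⟨fun hT => huT (topSet_mono h hT), ?_⟩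
  rintro ⟨-, t, ht, hut⟩
  exact huM ⟨huT, t, topSet_mono h ht, h hut⟩

lemma self_mem_gammaSet : x ∈ gammaSet G v0 x := ⟨Walk.nil, by simp⟩

lemma mem_gammaSet_of_adj (hu : u ∈ gammaSet G v0 x) (huv : G.Adj u v)
    (hv : v ∈ midSet G v0) : v ∈ gammaSet G v0 x := by
  obtain ⟨p, hp⟩ := hu
  refine ⟨p.concat huv, fun y hy => ?_⟩
  rw [Walk.support_concat, List.mem_append, List.mem_singleton] at hy
  rcases hy with hy | rfl
  exacts [hp y hy, Or.inr hv]

lemma gammaSet_mono (h : G ≤ H) (hH : H.Colorable 3) (x : V) :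
    gammaSet G v0 x ⊆ gammaSet H v0 x := by
  rintro w ⟨p, hp⟩
  refine ⟨p.mapLe h, fun y hy => ?_⟩
  rw [Walk.support_mapLe_eq_support] at hy
  exact Set.insert_subset_insert (midSet_mono h hH) (hp y hy)

end Partition

section Mixing

variable {V : Type*} {G : SimpleGraph V} {v0 b m m' m'' u v z t : V}

lemma midReach.left_mem (h : midReach G v0 m m') : m ∈ midSet G v0 :=
  let ⟨p, hp⟩ := h; hp m p.start_mem_support

lemma midReach.right_mem (h : midReach G v0 m m') : m' ∈ midSet G v0 :=
  let ⟨p, hp⟩ := h; hp m' p.end_mem_support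

lemma midReach_refl (hm : m ∈ midSet G v0) : midReach G v0 m m := ⟨Walk.nil, by simpa⟩

lemma midReach.concat (h : midReach G v0 m m') (hadj : G.Adj m' m'')
    (hm'' : m'' ∈ midSet G v0) : midReach G v0 m m'' := by
  obtain ⟨p, hp⟩ := h
  refine ⟨p.concat hadj, fun y hy => ?_⟩
  rw [Walk.support_concat, List.mem_append, List.mem_singleton] at hy
  rcases hy with hy | rfl
  exacts [hp y hy, hm'']

/-- `Γ_G(b)`, described through the middle-components attached to `b`. -/
def attachedSet (G : SimpleGraph V) (v0 b : V) : Set V :=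
  insert b {m | ∃ m₀, G.Adj b m₀ ∧ midReach G v0 m₀ m}

lemma attachedSet_subset : attachedSet G v0 b ⊆ insert b (midSet G v0) :=
  Set.insert_subset_insert fun _ ⟨_, _, h⟩ => h.right_mem

/-- (P1) excludes an edge from `b` to another bottom vertex, (P2) one from a middle vertex of the
region to another bottom vertex. -/
lemma mem_midSet_and_mem_topSet_of_adj_of_mem_attachedSet (hgood : goodGraph G v0)
    (hb : b ∈ bottomSet G v0) (hu : u ∈ attachedSet G v0 b) (hv : v ∉ attachedSet G v0 b)
    (huv : G.Adj u v) : u ∈ midSet G v0 ∧ v ∈ topSet G v0 := by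
  rcases hu with rfl | ⟨m₀, hbm₀, hm₀u⟩
  · have hvT : v ∉ topSet G v0 := fun hvT => hb.2 ⟨hb.1, v, hvT, huv⟩
    have hvM : v ∉ midSet G v0 := fun hvM => hv (Or.inr ⟨v, huv, midReach_refl hvM⟩)
    exact absurd huv (hgood.1 u hb v ⟨hvT, hvM⟩)
  · refine ⟨hm₀u.right_mem, by_contra fun hvT => ?_⟩
    have hvM : v ∉ midSet G v0 := fun hvM => hv (Or.inr ⟨m₀, hbm₀, hm₀u.concat huv hvM⟩)
    exact hv (Or.inl (hgood.2 b v m₀ u hb ⟨hvT, hvM⟩ hm₀u.left_mem hm₀u.right_mem hbm₀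
      huv.symm hm₀u).symm)

lemma exists_coloring_eqOn_attachedSet (hgood : goodGraph G v0) (hb : b ∈ bottomSet G v0)
    (c₁ c₂ : G.Coloring (Fin 3)) (hv0 : c₁ v0 = c₂ v0) :
    ∃ c : G.Coloring (Fin 3), (∀ u ∈ attachedSet G v0 b, c u = c₂ u) ∧
      ∀ u ∉ attachedSet G v0 b, c u = c₁ u :=
  c₁.exists_piecewise c₂ _ fun u v huv hu hv => by
    obtain ⟨huM, hvT⟩ := mem_midSet_and_mem_topSet_of_adj_of_mem_attachedSet hgood hb hu hv huv
    rw [hvT c₁, hv0]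
    exact apply_ne_of_mem_midSet c₂ huM

lemma exists_coloring_apply_ne_of_goodGraph_deleteEdges
    (hgood : goodGraph (G.deleteEdges {s(z, t)}) v0) (hb : b ∈ bottomSet G v0)
    (hz : z ∈ bottomSet G v0) (ht : t ∈ bottomSet G v0) (hzb : z ≠ b) (htb : t ≠ b)
    (hzt : G.Adj z t) : ∃ c : G.Coloring (Fin 3), c b ≠ c v0 ∧ c t ≠ c v0 := by
  have hle : G.deleteEdges {s(z, t)} ≤ G := deleteEdges_le _
  obtain ⟨c₁, hc₁⟩ : ∃ c : G.Coloring (Fin 3), c t ≠ c v0 := by simpa [topSet] using ht.1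
  obtain ⟨c₂, hc₂⟩ : ∃ c : G.Coloring (Fin 3), c b ≠ c v0 := by simpa [topSet] using hb.1
  obtain ⟨c₂, hc₂v0, hc₂eq⟩ := c₂.exists_apply_eq v0 (c₁ v0)
  obtain ⟨c₃, hc₃in, hc₃out⟩ := exists_coloring_eqOn_attachedSet hgood (bottomSet_anti hle hb)
    (c₁.comp (Hom.ofLE hle)) (c₂.comp (Hom.ofLE hle)) hc₂v0.symm
  have hout : ∀ y, y ≠ b → y ∉ midSet (G.deleteEdges {s(z, t)}) v0 →
      y ∉ attachedSet (G.deleteEdges {s(z, t)}) v0 b :=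
    fun y hyb hyM hy => (attachedSet_subset hy).elim hyb hyM
  have hv0 :=
    hc₃out v0 (hout v0 (fun h => hb.1 (h ▸ v0_mem_topSet)) fun h => h.1 v0_mem_topSet)
  have htc := hc₃out t (hout t htb (bottomSet_anti hle ht).2)
  obtain ⟨c, hc⟩ := c₃.exists_of_deleteEdges (by
    rw [hc₃out z (hout z hzb (bottomSet_anti hle hz).2), htc]
    exact c₁.valid hzt)
  refine ⟨c, ?_, ?_⟩ <;> rw [hc, hv0]
  · rw [hc₃in b (Set.mem_insert b _)]
    change c₂ b ≠ c₁ v0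
    rw [← hc₂v0]
    exact fun h => hc₂ ((hc₂eq b v0).1 h)
  · rw [htc]
    exact hc₁

lemma goodGraph_deleteEdges_of_almostGood (hgood : almostGood G v0) (hz : z ∈ bottomSet G v0)
    (ht : t ∈ bottomSet G v0) (hzt : G.Adj z t) : goodGraph (G.deleteEdges {s(z, t)}) v0 := by
  rcases hgood with hgood | ⟨e, -, hgood⟩
  · exact absurd hzt (hgood.1 z hz t ht)
  obtain rfl | he := eq_or_ne e s(z, t)
  · exact hgood
  · have hle : G.deleteEdges {e} ≤ G := deleteEdges_le _
    have hzt' : (G.deleteEdges {e}).Adj z t := (deleteEdges_adj ..).2 ⟨hzt, Ne.symm he⟩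
    exact absurd hzt' (hgood.1 z (bottomSet_anti hle hz) t (bottomSet_anti hle ht))

end Mixing

section AddEdge

variable {V : Type*} {G : SimpleGraph V} {v0 a b w x y z : V}

lemma addEdge_adj_of_ne (hab : a ≠ b) : (addEdge G s(a, b)).Adj a b :=
  Or.inr ((edge_adj ..).2 ⟨Or.inl ⟨rfl, rfl⟩, hab⟩)

lemma notMem_topSet_addEdge (hab : a ≠ b) (haT : a ∈ topSet G v0)
    (hcol : (addEdge G s(a, b)).Colorable 3) : b ∉ topSet (addEdge G s(a, b)) v0 :=
  let ⟨c⟩ := hcol; notMem_topSet_of_adj c (addEdge_adj_of_ne hab) (topSet_mono le_sup_left haT)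

lemma apply_eq_of_mem_topSet_addEdge (haT : a ∈ topSet G v0) (c : G.Coloring (Fin 3))
    (hb : c b ≠ c v0) (hy : y ∈ topSet (addEdge G s(a, b)) v0) : c y = c v0 := by
  obtain ⟨c', hc'⟩ := c.exists_sup_edge (s := a) (t := b) (by rw [haT c]; exact hb.symm)
  exact (congrFun hc' y).symm.trans ((hy c').trans (congrFun hc' v0))

lemma midSet_addEdge_subset (haT : a ∈ topSet G v0) (hbM : b ∈ midSet G v0) :
    midSet (addEdge G s(a, b)) v0 ⊆ midSet G v0 := by
  have hT : topSet (addEdge G s(a, b)) v0 ⊆ topSet G v0 :=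
    fun y hy c => apply_eq_of_mem_topSet_addEdge haT c (apply_ne_of_mem_midSet c hbM) hy
  rintro m ⟨hmT, t, htT, hmt | hmt⟩
  · exact ⟨fun h => hmT (topSet_mono le_sup_left h), t, hT htT, hmt⟩
  · rcases ((edge_adj ..).1 hmt).1 with ⟨rfl, -⟩ | ⟨rfl, -⟩
    exacts [absurd (topSet_mono le_sup_left haT) hmT, hbM]

/-- Walks inside `Γ_{G₁}(x)` avoid the top vertex `a`, hence never use the new edge. -/
lemma exists_walk_of_mem_gammaSet_addEdge (hxa : x ≠ a)
    (haT : a ∈ topSet (addEdge G s(a, b)) v0) (hw : w ∈ gammaSet (addEdge G s(a, b)) v0 x) :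
    ∃ q : G.Walk x w, ∀ z ∈ q.support, z ∈ insert x (midSet (addEdge G s(a, b)) v0) := by
  obtain ⟨p, hp⟩ := hw
  have ha : a ∉ p.support := fun ha => (hp a ha).elim (fun h => hxa h.symm) fun h => h.1 haT
  have hE : ∀ e ∈ p.edges, e ∈ G.edgeSet := by
    intro e he
    induction e using Sym2.ind with
    | h u v =>
      rcases p.adj_of_mem_edges he with huv | huv
      · exact huv
      · rcases ((edge_adj ..).1 huv).1 with ⟨rfl, -⟩ | ⟨-, rfl⟩
        · exact absurd (p.fst_mem_support_of_mem_edges he) ha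
        · exact absurd (p.snd_mem_support_of_mem_edges he) ha
  exact ⟨p.transfer G hE, by rwa [p.support_transfer]⟩

lemma gammaSet_addEdge_subset_of_mem_midSet (hxa : x ≠ a) (haT : a ∈ topSet G v0)
    (hbM : b ∈ midSet G v0) : gammaSet (addEdge G s(a, b)) v0 x ⊆ gammaSet G v0 x := by
  intro w hw
  obtain ⟨q, hq⟩ := exists_walk_of_mem_gammaSet_addEdge hxa (topSet_mono le_sup_left haT) hw
  exact ⟨q, fun z hz => Set.insert_subset_insert (midSet_addEdge_subset haT hbM) (hq z hz)⟩

lemma eq_of_mem_bottomSet_of_mem_midSet_addEdge (hgood : almostGood G v0) (hab : a ≠ b)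
    (haT : a ∈ topSet G v0) (hcol : (addEdge G s(a, b)).Colorable 3)
    (hb : b ∈ bottomSet G v0) (hz : z ∈ bottomSet G v0)
    (hz₁ : z ∈ midSet (addEdge G s(a, b)) v0) : z = b := by
  by_contra hzb
  have hle : G ≤ addEdge G s(a, b) := le_sup_left
  obtain ⟨c₁⟩ := hcol
  obtain ⟨hzT₁, t, htT₁, hzt₁⟩ := hz₁
  have hzt : G.Adj z t := by
    rcases hzt₁ with h | h
    · exact h
    · rcases ((edge_adj ..).1 h).1 with ⟨rfl, -⟩ | ⟨rfl, -⟩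
      exacts [absurd (topSet_mono hle haT) hzT₁, absurd rfl hzb]
  have ht : t ∈ bottomSet G v0 :=
    ⟨fun htT => hz.2 ⟨hz.1, t, htT, hzt⟩, fun htM => (midSet_mono hle ⟨c₁⟩ htM).1 htT₁⟩
  have htb : t ≠ b := by
    rintro rfl
    exact notMem_topSet_addEdge hab haT ⟨c₁⟩ htT₁
  obtain ⟨c, hcb, hct⟩ := exists_coloring_apply_ne_of_goodGraph_deleteEdges
    (goodGraph_deleteEdges_of_almostGood hgood hz ht hzt) hb hz ht hzb htb hzt
  exact hct (apply_eq_of_mem_topSet_addEdge haT c hcb htT₁)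

end AddEdge

theorem statement_16_general {V : Type*} (G : SimpleGraph V) (v0 : V)
    (hgood : almostGood G v0)
    (a b : V) (hab : a ≠ b) (haT : a ∈ topSet G v0)
    (hcol1 : (addEdge G s(a, b)).Colorable 3)
    (x : V) (hxa : x ≠ a)
    (hGamma : gammaSet (addEdge G s(a, b)) v0 x ≠ gammaSet G v0 x) :
    b ∈ bottomSet G v0 ∧ b ≠ x ∧ ∃ u ∈ gammaSet G v0 x, G.Adj u b := by
  have hle : G ≤ addEdge G s(a, b) := le_sup_left
  have haT₁ := topSet_mono hle haT
  have hsub : gammaSet G v0 x ⊆ gammaSet (addEdge G s(a, b)) v0 x := gammaSet_mono hle hcol1 x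
  have hb : b ∈ bottomSet G v0 :=
    ⟨fun hbT => notMem_topSet_addEdge hab haT hcol1 (topSet_mono hle hbT), fun hbM =>
      hGamma ((gammaSet_addEdge_subset_of_mem_midSet hxa haT hbM).antisymm hsub)⟩
  obtain ⟨w, hw, hwx⟩ := Set.exists_of_ssubset (hsub.ssubset_of_ne hGamma.symm)
  obtain ⟨q, hq⟩ := exists_walk_of_mem_gammaSet_addEdge hxa haT₁ hw
  obtain ⟨d, hd, hd₁, hd₂⟩ := q.exists_boundary_dart _ self_mem_gammaSet hwx
  have hdx : d.snd ≠ x := fun h => hd₂ (h ▸ self_mem_gammaSet)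
  have hdM₁ : d.snd ∈ midSet (addEdge G s(a, b)) v0 :=
    (hq _ (q.dart_snd_mem_support_of_mem_darts hd)).resolve_left hdx
  have hdB : d.snd ∈ bottomSet G v0 :=
    ⟨fun hT => hdM₁.1 (topSet_mono hle hT), fun hM => hd₂ (mem_gammaSet_of_adj hd₁ d.adj hM)⟩
  obtain rfl := eq_of_mem_bottomSet_of_mem_midSet_addEdge hgood hab haT hcol1 hb hdB hdM₁
  exact ⟨hb, hdx, d.fst, hd₁, d.adj⟩

/-- If `G` is an almost good 3-colorable graph, `G1 = G ∪ {ab}` is 3-colorable where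
`ab` is a non-edge of `G` with `a ∈ T_G`, and `x ≠ a` is a vertex with
`Γ_{G1}(x) ≠ Γ_G(x)`, then `b ∈ B_G`, `b ≠ x`, and `G` has an edge `ub` with
`u ∈ V(Γ_G(x))`. -/
theorem statement_16 {V : Type*} (G : SimpleGraph V) (v0 : V)
    (hcol : G.Colorable 3) (hgood : almostGood G v0)
    (a b : V) (hab : a ≠ b) (haT : a ∈ topSet G v0) (hne : s(a, b) ∉ G.edgeSet)
    (hcol1 : (addEdge G s(a, b)).Colorable 3)
    (x : V) (hxa : x ≠ a)
    (hGamma : gammaSet (addEdge G s(a, b)) v0 x ≠ gammaSet G v0 x) :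
    b ∈ bottomSet G v0 ∧ b ≠ x ∧ ∃ u ∈ gammaSet G v0 x, G.Adj u b :=
  statement_16_general G v0 hgood a b hab haT hcol1 x hxa hGamma
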